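/- Let μ > 0 and ℏ > 0 be real constants and let F, G : ℝ → ℝ be continuous. Then the time kernel factor T_S satisfies the integral form of the time kernel equation: for all real u, v, T_S(u,v) = u/4 + (μ/(2ℏ²)) ∫_0^u F(u') (∫_0^v G(v')·T_S(u',v') dv') du'. -/

import Mathlib

/-- The confluent hypergeometric limit function ₀F₁(;1;z) = Σ_{n=0}^∞ zⁿ/(n!)². -/
noncomputable def hyp0F1one (z : ℝ) : ℝ := ∑' n : ℕ, z ^ n / ((n.factorial : ℝ)) ^ 2

/-- The time kernel factor T_S(u,v). -/
noncomputable def TS (μ hbar : ℝ) (F G : ℝ → ℝ) (u v : ℝ) : ℝ :=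
  u / 4 + μ / (2 * hbar ^ 2) *
    ∫ v' in (0:ℝ)..v, G v' *
      ∫ u' in (0:ℝ)..u, F u' * (u' / 4) *
        hyp0F1one (μ / (2 * hbar ^ 2) * (∫ s in v'..v, G s) * (∫ s in u'..u, F s))

/-!
Put `c = μ / (2 ℏ²)`, `P v = ∫₀ᵛ G`, `Q u = ∫₀ᵘ F`, and let `L₀ u = u / 4`,
`Lₘ₊₁ u = ∫₀ᵘ F Lₘ` be the iterated primitives. Expanding `₀F₁` termwise and integrating in `v'`
first, Cauchy's formula for repeated integration `n! Lₙ₊₁ u = ∫₀ᵘ F(s) (s/4) (Q u - Q s)ⁿ ds`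
turns `T_S` into the series `T_S(u, v) = ∑ₘ (c P v)ᵐ / m! · Lₘ u`. Integrating this series
termwise against `F(u') G(v')` raises both the power of `P v` and the index of `L` by one, which
is the integral equation. Every interchange of sum and integral is dominated by terms `C rᵐ / m!`
on compact intervals.
-/

open Set Finset Nat intervalIntegral

theorem hasSum_intervalIntegral_of_norm_le {E : Type*} [NormedAddCommGroup E] [NormedSpace ℝ E]
    {f : ℕ → ℝ → E} {g : ℝ → E} {M : ℕ → ℝ} {a b : ℝ} (hf : ∀ n, Continuous (f n))
    (hM : Summable M) (hle : ∀ n, ∀ x ∈ uIcc a b, ‖f n x‖ ≤ M n)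
    (hg : ∀ x ∈ uIcc a b, HasSum (fun n => f n x) (g x)) :
    HasSum (fun n => ∫ x in a..b, f n x) (∫ x in a..b, g x) :=
  hasSum_integral_of_dominated_convergence (fun n _ => M n) (fun n => (hf n).aestronglyMeasurable)
    (fun n => .of_forall fun x hx => hle n x (uIoc_subset_uIcc hx))
    (.of_forall fun _ _ => hM) intervalIntegrable_const
    (.of_forall fun x hx => hg x (uIoc_subset_uIcc hx))

theorem exists_norm_le_on_uIcc {E : Type*} [SeminormedAddCommGroup E] {f : ℝ → E}
    (hf : Continuous f) (a b : ℝ) : ∃ C, 0 ≤ C ∧ ∀ x ∈ uIcc a b, ‖f x‖ ≤ C := by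
  obtain ⟨C, hC⟩ := isCompact_uIcc.exists_bound_of_continuousOn hf.continuousOn
  exact ⟨C, (norm_nonneg _).trans (hC a left_mem_uIcc), hC⟩

section CauchyFormula

variable {h Q q : ℝ → ℝ}

theorem integral_mul_sub_pow_eq_sum (hh : Continuous h) (hQ : Continuous Q) (n : ℕ) (u : ℝ) :
    ∫ s in (0:ℝ)..u, h s * (Q u - Q s) ^ n =
      ∑ k ∈ range (n + 1), Q u ^ k * n.choose k * ∫ s in (0:ℝ)..u, h s * (-Q s) ^ (n - k) := by
  simp_rw [sub_eq_add_neg, add_pow, mul_sum]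
  rw [integral_finsetSum fun k _ => (by fun_prop : Continuous _).intervalIntegrable _ _]
  refine sum_congr rfl fun k _ => ?_
  rw [← integral_const_mul]
  exact integral_congr fun s _ => by ring

theorem hasDerivAt_integral_mul_sub_pow (hh : Continuous h) (hQ : ∀ x, HasDerivAt Q (q x) x)
    (n : ℕ) (u : ℝ) :
    HasDerivAt (fun x => ∫ s in (0:ℝ)..x, h s * (Q x - Q s) ^ (n + 1))
      ((n + 1) * q u * ∫ s in (0:ℝ)..u, h s * (Q u - Q s) ^ n) u := by
  have hQc : Continuous Q := continuous_iff_continuousAt.2 fun x => (hQ x).continuousAt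
  set M : ℕ → ℝ → ℝ := fun j x => ∫ s in (0:ℝ)..x, h s * (-Q s) ^ j
  have hM : ∀ j, HasDerivAt (M j) (h u * (-Q u) ^ j) u := fun j =>
    (Continuous.integral_hasStrictDerivAt (by fun_prop) 0 u).hasDerivAt
  simp_rw [integral_mul_sub_pow_eq_sum hh hQc]
  refine (HasDerivAt.fun_sum fun k _ =>
    (((hQ u).pow k).mul_const _).mul (hM (n + 1 - k))).congr_deriv ?_
  -- Differentiating the upper limit contributes `h u * (Q u - Q u) ^ (n + 1) = 0`.
  have hvanish : ∑ k ∈ range (n + 1 + 1), Q u ^ k * (n + 1).choose k * (h u * (-Q u) ^ (n + 1 - k))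
      = 0 := by
    rw [← mul_zero (h u), ← zero_pow n.succ_ne_zero, ← add_neg_cancel (Q u), add_pow, mul_sum]
    exact sum_congr rfl fun k _ => by ring
  simp only [Pi.pow_apply]
  rw [sum_add_distrib, hvanish, add_zero, sum_range_succ', mul_sum]
  simp only [CharP.cast_eq_zero, zero_mul, add_zero]
  refine sum_congr rfl fun j _ => ?_
  have hchoose : ((n + 1).choose (j + 1) : ℝ) * (j + 1) = (n + 1) * n.choose j := by
    exact_mod_cast (add_one_mul_choose_eq n j).symm
  simp only [Nat.add_sub_cancel, Nat.add_sub_add_right]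
  push_cast
  linear_combination (Q u ^ j * q u * M (n - j) u) * hchoose

end CauchyFormula

noncomputable def iteratedPrimitive (f g : ℝ → ℝ) : ℕ → ℝ → ℝ
  | 0 => g
  | n + 1 => fun u => ∫ s in (0:ℝ)..u, f s * iteratedPrimitive f g n s

namespace iteratedPrimitive

variable {f g : ℝ → ℝ}

theorem continuous (hf : Continuous f) (hg : Continuous g) (n : ℕ) :
    Continuous (iteratedPrimitive f g n) := by
  induction n with
  | zero => exact hg
  | succ n ih => exact continuous_primitive (fun _ _ => (hf.mul ih).intervalIntegrable _ _) 0

theorem norm_le {u A B : ℝ} (hf : ∀ s ∈ uIcc 0 u, ‖f s‖ ≤ A) (hg : ∀ s ∈ uIcc 0 u, ‖g s‖ ≤ B)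
    (n : ℕ) {s : ℝ} (hs : s ∈ uIcc 0 u) : ‖iteratedPrimitive f g n s‖ ≤ B * (A * |u|) ^ n := by
  have hA : 0 ≤ A := (norm_nonneg _).trans (hf 0 left_mem_uIcc)
  have hB : 0 ≤ B := (norm_nonneg _).trans (hg 0 left_mem_uIcc)
  induction n generalizing s with
  | zero => simpa [iteratedPrimitive] using hg s hs
  | succ n ih =>
    have hsub : uIcc 0 s ⊆ uIcc 0 u := uIcc_subset_uIcc left_mem_uIcc hs
    have hint : ‖iteratedPrimitive f g (n + 1) s‖ ≤ A * (B * (A * |u|) ^ n) * |s - 0| := by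
      refine norm_integral_le_of_norm_le_const fun t ht => ?_
      have ht' := hsub (uIoc_subset_uIcc ht)
      rw [norm_mul]
      exact mul_le_mul (hf t ht') (ih ht') (norm_nonneg _) hA
    calc _ ≤ A * (B * (A * |u|) ^ n) * |s - 0| := hint
      _ ≤ A * (B * (A * |u|) ^ n) * |u - 0| :=
          mul_le_mul_of_nonneg_left (abs_sub_left_of_mem_uIcc hs) (by positivity)
      _ = B * (A * |u|) ^ (n + 1) := by rw [sub_zero]; ring

theorem factorial_mul_succ_eq_integral {Q : ℝ → ℝ} (hf : Continuous f) (hg : Continuous g)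
    (hQ : ∀ x, HasDerivAt Q (f x) x) (n : ℕ) (u : ℝ) :
    n ! * iteratedPrimitive f g (n + 1) u = ∫ s in (0:ℝ)..u, f s * g s * (Q u - Q s) ^ n := by
  induction n generalizing u with
  | zero => simp [iteratedPrimitive]
  | succ n ih =>
    have hderiv : ∀ t ∈ uIcc 0 u,
        HasDerivAt (fun x => ∫ s in (0:ℝ)..x, f s * g s * (Q x - Q s) ^ (n + 1))
          ((n + 1) * f t * (n ! * iteratedPrimitive f g (n + 1) t)) t := fun t _ => by
      rw [ih]
      exact hasDerivAt_integral_mul_sub_pow (hf.mul hg) hQ n t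
    have hftc := integral_eq_sub_of_hasDerivAt hderiv
      (((continuous_const.mul hf).mul (continuous_const.mul
        (continuous hf hg (n + 1)))).intervalIntegrable 0 u)
    rw [integral_same, sub_zero] at hftc
    rw [← hftc, iteratedPrimitive, ← integral_const_mul]
    refine integral_congr fun t _ => ?_
    push_cast [factorial_succ]
    ring

end iteratedPrimitive

theorem integral_mul_pow_of_hasDerivAt {P p : ℝ → ℝ} (hP : ∀ x, HasDerivAt P (p x) x)
    (hp : Continuous p) (n : ℕ) (a b : ℝ) :
    ∫ x in a..b, p x * P x ^ n = (P b ^ (n + 1) - P a ^ (n + 1)) / (n + 1) := by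
  rw [← integral_pow, ← integral_comp_mul_deriv (fun x _ => hP x) hp.continuousOn
    (continuous_pow n)]
  exact integral_congr fun x _ => mul_comm _ _

theorem integral_mul_sub_pow_of_hasDerivAt {P p : ℝ → ℝ} (hP : ∀ x, HasDerivAt P (p x) x)
    (hp : Continuous p) (n : ℕ) (a b : ℝ) :
    ∫ x in a..b, p x * (P b - P x) ^ n = (P b - P a) ^ (n + 1) / (n + 1) := by
  have hderiv : ∀ x, HasDerivAt (fun y => P b - P y) (-p x) x := fun x => by
    simpa using (hP x).const_sub (P b)
  have h := integral_mul_pow_of_hasDerivAt hderiv hp.neg n a b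
  simp only [neg_mul, integral_neg, sub_self, zero_pow n.succ_ne_zero, zero_sub, neg_div,
    neg_inj] at h
  exact h

theorem summable_pow_div_factorial_sq (x : ℝ) : Summable fun n => x ^ n / (n ! : ℝ) ^ 2 := by
  refine (Real.summable_pow_div_factorial |x|).of_norm_bounded fun n => ?_
  have h1 : (1 : ℝ) ≤ n ! := mod_cast n.factorial_pos
  rw [norm_div, norm_pow, Real.norm_eq_abs, norm_pow, Real.norm_natCast]
  gcongr
  exact le_self_pow₀ h1 two_ne_zero

theorem hasSum_hyp0F1one (z : ℝ) : HasSum (fun n => z ^ n / (n ! : ℝ) ^ 2) (hyp0F1one z) :=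
  (summable_pow_div_factorial_sq z).hasSum

theorem hasSum_integral_mul_hyp0F1one {h Q : ℝ → ℝ} (hh : Continuous h) (hQ : Continuous Q)
    (z u : ℝ) :
    HasSum (fun n => z ^ n / (n ! : ℝ) ^ 2 * ∫ s in (0:ℝ)..u, h s * (Q u - Q s) ^ n)
      (∫ s in (0:ℝ)..u, h s * hyp0F1one (z * (Q u - Q s))) := by
  obtain ⟨H, hH0, hH⟩ := exists_norm_le_on_uIcc hh 0 u
  obtain ⟨D, -, hD⟩ := exists_norm_le_on_uIcc (by fun_prop : Continuous fun s => Q u - Q s) 0 u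
  simp_rw [← integral_const_mul]
  refine hasSum_intervalIntegral_of_norm_le (fun n => by fun_prop)
    ((summable_pow_div_factorial_sq (|z| * D)).mul_left H) (fun n s hs => ?_) fun s _ => ?_
  · calc _ = ‖h s‖ * ((|z| * ‖Q u - Q s‖) ^ n / (n ! : ℝ) ^ 2) := by
          rw [norm_mul, norm_mul, norm_div, norm_pow, norm_pow, norm_pow, Real.norm_natCast,
            Real.norm_eq_abs, mul_pow]
          ring
      _ ≤ H * ((|z| * D) ^ n / (n ! : ℝ) ^ 2) := by
          gcongr
          exacts [hH s hs, hD s hs]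
  · exact ((hasSum_hyp0F1one _).mul_left (h s)).congr_fun fun n => by rw [mul_pow]; ring

theorem iteratedPrimitive.hasSum_integral_hyp0F1one {f g : ℝ → ℝ} (hf : Continuous f)
    (hg : Continuous g) (z u : ℝ) :
    HasSum (fun n => z ^ n / n ! * iteratedPrimitive f g (n + 1) u)
      (∫ s in (0:ℝ)..u, f s * g s * hyp0F1one (z * ∫ x in s..u, f x)) := by
  set Q : ℝ → ℝ := fun x => ∫ s in (0:ℝ)..x, f s
  have hQ : ∀ x, HasDerivAt Q (f x) x := fun x => (hf.integral_hasStrictDerivAt 0 x).hasDerivAt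
  have hQc : Continuous Q := continuous_iff_continuousAt.2 fun x => (hQ x).continuousAt
  have hQus : ∀ s, ∫ x in s..u, f x = Q u - Q s := fun s =>
    (integral_interval_sub_left (hf.intervalIntegrable _ _) (hf.intervalIntegrable _ _)).symm
  simp_rw [hQus]
  refine (hasSum_integral_mul_hyp0F1one (h := fun s => f s * g s) (by fun_prop) hQc z u)
    |>.congr_fun fun n => ?_
  rw [← factorial_mul_succ_eq_integral hf hg hQ]
  field_simp

theorem hasSum_TS (μ hbar : ℝ) {F G : ℝ → ℝ} (hF : Continuous F) (hG : Continuous G) (u v : ℝ) :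
    HasSum (fun n => (μ / (2 * hbar ^ 2) * ∫ w in (0:ℝ)..v, G w) ^ n / n ! *
      iteratedPrimitive F (· / 4) n u) (TS μ hbar F G u v) := by
  set c := μ / (2 * hbar ^ 2)
  set P : ℝ → ℝ := fun x => ∫ w in (0:ℝ)..x, G w
  set L := iteratedPrimitive F (· / 4)
  have hP : ∀ x, HasDerivAt P (G x) x := fun x => (hG.integral_hasStrictDerivAt 0 x).hasDerivAt
  have hPvw : ∀ w, ∫ x in w..v, G x = P v - P w := fun w =>
    (integral_interval_sub_left (hG.intervalIntegrable _ _) (hG.intervalIntegrable _ _)).symm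
  obtain ⟨A, hA0, hA⟩ := exists_norm_le_on_uIcc hF 0 u
  obtain ⟨B, hB0, hB⟩ := exists_norm_le_on_uIcc (by fun_prop : Continuous fun s : ℝ => s / 4) 0 u
  obtain ⟨C, hC0, hC⟩ := exists_norm_le_on_uIcc hG 0 v
  obtain ⟨D, -, hD⟩ := exists_norm_le_on_uIcc (by fun_prop : Continuous fun w => P v - P w) 0 v
  have hL := fun n => iteratedPrimitive.norm_le hA hB n (right_mem_uIcc (a := 0) (b := u))
  have hterm : ∀ n : ℕ, ∫ w in (0:ℝ)..v, G w * (P v - P w) ^ n = P v ^ (n + 1) / (n + 1) := by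
    intro n
    rw [integral_mul_sub_pow_of_hasDerivAt hP hG, show P 0 = 0 from integral_same, sub_zero]
  have hseries : HasSum (fun n => c ^ n / n ! * L (n + 1) u * (P v ^ (n + 1) / (n + 1)))
      (∫ w in (0:ℝ)..v, G w * ∫ s in (0:ℝ)..u, F s * (s / 4) *
        hyp0F1one (c * (∫ x in w..v, G x) * ∫ x in s..u, F x)) := by
    refine (hasSum_intervalIntegral_of_norm_le
      (f := fun n w => c ^ n / n ! * L (n + 1) u * (G w * (P v - P w) ^ n)) (fun n => by fun_prop)
      ((Real.summable_pow_div_factorial (|c| * D * (A * |u|))).mul_left (C * (B * (A * |u|))))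
      (fun n w hw => ?_) fun w _ =>
        ((iteratedPrimitive.hasSum_integral_hyp0F1one hF (by fun_prop) _ u).mul_left (G w))
          |>.congr_fun fun n => by rw [hPvw, mul_pow]; ring)
      |>.congr_fun fun n => by rw [integral_const_mul, hterm]
    calc _ = |c| ^ n / n ! * ‖L (n + 1) u‖ * (‖G w‖ * ‖P v - P w‖ ^ n) := by
          rw [norm_mul, norm_mul, norm_mul, norm_div, norm_pow, norm_pow, Real.norm_natCast,
            Real.norm_eq_abs]
      _ ≤ |c| ^ n / n ! * (B * (A * |u|) ^ (n + 1)) * (C * D ^ n) := by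
          gcongr
          exacts [hL _, hC w hw, hD w hw]
      _ = _ := by ring
  rw [← hasSum_nat_add_iff' 1, sum_range_one, pow_zero, factorial_zero, Nat.cast_one, div_one,
    one_mul, show TS μ hbar F G u v - L 0 u = c * _ from add_sub_cancel_left _ _]
  refine (hseries.mul_left c).congr_fun fun n => ?_
  rw [factorial_succ]
  push_cast
  field_simp
  ring

theorem hasSum_integral_mul_of_hasSum_primitive_pow {G τ : ℝ → ℝ} {a : ℕ → ℝ} {c B R : ℝ}
    (hG : Continuous G) (ha : ∀ m, ‖a m‖ ≤ B * R ^ m)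
    (hτ : ∀ w, HasSum (fun m => (c * ∫ x in (0:ℝ)..w, G x) ^ m / m ! * a m) (τ w)) (v : ℝ) :
    HasSum (fun m => c ^ m / m ! * a m * ((∫ x in (0:ℝ)..v, G x) ^ (m + 1) / (m + 1)))
      (∫ w in (0:ℝ)..v, G w * τ w) := by
  set P : ℝ → ℝ := fun x => ∫ w in (0:ℝ)..x, G w
  have hP : ∀ x, HasDerivAt P (G x) x := fun x => (hG.integral_hasStrictDerivAt 0 x).hasDerivAt
  have hPc : Continuous P := continuous_iff_continuousAt.2 fun x => (hP x).continuousAt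
  obtain ⟨C, hC0, hC⟩ := exists_norm_le_on_uIcc hG 0 v
  obtain ⟨K, -, hK⟩ := exists_norm_le_on_uIcc hPc 0 v
  have hterm : ∀ m : ℕ, ∫ w in (0:ℝ)..v, G w * P w ^ m = P v ^ (m + 1) / (m + 1) := fun m => by
    rw [integral_mul_pow_of_hasDerivAt hP hG, show P 0 = 0 from integral_same,
      zero_pow m.succ_ne_zero, sub_zero]
  refine (hasSum_intervalIntegral_of_norm_le
    (f := fun m w => c ^ m / m ! * a m * (G w * P w ^ m)) (fun m => by fun_prop)
    ((Real.summable_pow_div_factorial (|c| * R * K)).mul_left (B * C)) (fun m w hw => ?_)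
    fun w _ => ((hτ w).mul_left (G w)).congr_fun fun m => by rw [mul_pow]; ring)
    |>.congr_fun fun m => by rw [integral_const_mul, hterm]
  have hBR : 0 ≤ B * R ^ m := (norm_nonneg _).trans (ha m)
  calc _ = |c| ^ m / m ! * ‖a m‖ * (‖G w‖ * ‖P w‖ ^ m) := by
        rw [norm_mul, norm_mul, norm_mul, norm_div, norm_pow, norm_pow, Real.norm_natCast,
          Real.norm_eq_abs]
    _ ≤ |c| ^ m / m ! * (B * R ^ m) * (C * K ^ m) := by
        gcongr
        exacts [ha m, hC w hw, hK w hw]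
    _ = _ := by ring

theorem eq_add_integral_integral_of_hasSum {F G g : ℝ → ℝ} {T : ℝ → ℝ → ℝ} (hF : Continuous F)
    (hG : Continuous G) (hg : Continuous g) (c : ℝ)
    (hT : ∀ s w, HasSum (fun m => (c * ∫ x in (0:ℝ)..w, G x) ^ m / m ! *
      iteratedPrimitive F g m s) (T s w)) (u v : ℝ) :
    T u v = g u + c * ∫ s in (0:ℝ)..u, F s * ∫ w in (0:ℝ)..v, G w * T s w := by
  set L := iteratedPrimitive F g
  set p := ∫ x in (0:ℝ)..v, G x
  have hLc : ∀ m, Continuous (L m) := iteratedPrimitive.continuous hF hg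
  obtain ⟨A, hA0, hA⟩ := exists_norm_le_on_uIcc hF 0 u
  obtain ⟨B, -, hB⟩ := exists_norm_le_on_uIcc hg 0 u
  have hL := iteratedPrimitive.norm_le hA hB
  have hseries : HasSum (fun m => c ^ m / m ! * (p ^ (m + 1) / (m + 1)) * L (m + 1) u)
      (∫ s in (0:ℝ)..u, F s * ∫ w in (0:ℝ)..v, G w * T s w) := by
    refine (hasSum_intervalIntegral_of_norm_le
      (f := fun m s => c ^ m / m ! * (p ^ (m + 1) / (m + 1)) * (F s * L m s))
      (fun m => by fun_prop)
      ((Real.summable_pow_div_factorial (|c| * ‖p‖ * (A * |u|))).mul_left (‖p‖ * A * B))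
      (fun m s hs => ?_) fun s hs =>
        ((hasSum_integral_mul_of_hasSum_primitive_pow hG (fun m => hL m hs) (hT s) v).mul_left
          (F s)).congr_fun fun m => by ring)
      |>.congr_fun fun m => by rw [integral_const_mul]; rfl
    have hp : ‖p ^ (m + 1) / (m + 1)‖ ≤ ‖p‖ ^ (m + 1) := by
      rw [norm_div, norm_pow]
      exact div_le_self (by positivity)
        ((le_add_of_nonneg_left m.cast_nonneg).trans (Real.le_norm_self _))
    calc _ = |c| ^ m / m ! * ‖p ^ (m + 1) / (m + 1)‖ * (‖F s‖ * ‖L m s‖) := by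
          rw [norm_mul, norm_mul, norm_mul, norm_div, norm_pow, Real.norm_natCast,
            Real.norm_eq_abs]
      _ ≤ |c| ^ m / m ! * ‖p‖ ^ (m + 1) * (A * (B * (A * |u|) ^ m)) := by
          gcongr
          exacts [hA s hs, hL m hs]
      _ = _ := by ring
  refine (hT u v).unique ((hasSum_nat_add_iff' 1).mp ?_)
  rw [sum_range_one, pow_zero, factorial_zero, Nat.cast_one, div_one, one_mul,
    show L 0 u = g u from rfl, add_sub_cancel_left]
  refine (hseries.mul_left c).congr_fun fun m => ?_
  rw [factorial_succ]
  push_cast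
  field_simp
  ring

theorem stmt9_general (μ hbar : ℝ)
    (F G : ℝ → ℝ) (hF : Continuous F) (hG : Continuous G) :
    ∀ u v : ℝ, TS μ hbar F G u v =
      u / 4 + μ / (2 * hbar ^ 2) *
        ∫ u' in (0:ℝ)..u, F u' * ∫ v' in (0:ℝ)..v, G v' * TS μ hbar F G u' v' :=
  eq_add_integral_integral_of_hasSum hF hG (by fun_prop) _ (hasSum_TS μ hbar hF hG)

theorem stmt9 (μ hbar : ℝ) (hμ : 0 < μ) (hhbar : 0 < hbar)
    (F G : ℝ → ℝ) (hF : Continuous F) (hG : Continuous G) :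
    ∀ u v : ℝ, TS μ hbar F G u v =
      u / 4 + μ / (2 * hbar ^ 2) *
        ∫ u' in (0:ℝ)..u, F u' * ∫ v' in (0:ℝ)..v, G v' * TS μ hbar F G u' v' :=
  stmt9_general μ hbar F G hF hG
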